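/- Let n ≥ 4 be divisible by 4. Then there exists a simple graph G on n vertices with minimum degree δ(G) = 3n/4 - 1 together with a 2-edge-colouring of G such that every monochromatic component has order exactly n/2. -/

import Mathlib

open SimpleGraph

/-- The colour-`i` subgraph of the graph `G` under the edge-colouring `c`. -/
def colourSub {V : Type*} {k : ℕ} (G : SimpleGraph V) (c : Sym2 V → Fin k) (i : Fin k) :
    SimpleGraph V where
  Adj u v := G.Adj u v ∧ c s(u, v) = i
  symm := by
    refine ⟨?_⟩
    intro u v h
    exact ⟨h.1.symm, by rw [Sym2.eq_swap]; exact h.2⟩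
  loopless := by
    refine ⟨?_⟩
    intro u h
    exact G.irrefl h.1

/-- `K` is a monochromatic component of colour `i`: a connected component of the colour-`i`
subgraph of `G` that contains at least one edge. Its order is `K.supp.ncard`. -/
def IsMonoComp {V : Type*} {k : ℕ} (G : SimpleGraph V) (c : Sym2 V → Fin k) (i : Fin k)
    (K : (colourSub G c i).ConnectedComponent) : Prop :=
  ∃ u v, (colourSub G c i).Adj u v ∧ (colourSub G c i).connectedComponentMk u = K

/-- The minimum degree of a finite simple graph (classical version). -/
noncomputable def minDeg {V : Type*} [Fintype V] (G : SimpleGraph V) : ℕ :=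
  @SimpleGraph.minDegree V G _ (Classical.decRel _)


/-!
Split the vertices into four classes of size `n/4`, indexed by `(x, y) ∈ Bool × Bool`; join two
vertices when they agree in `x` or in `y`, and colour the edge red if they agree in `x`, blue
otherwise. The red components are the two `x`-classes. A blue component is a whole `y`-class:
two vertices of it with the same `x` are joined by a blue path of length two through any vertex of
the other `x`-class. Each vertex misses exactly the class differing from it in both coordinates,
so the graph is `(3n/4 - 1)`-regular.
-/

theorem SimpleGraph.Reachable.eq_of_forall_adj {V α : Type*} {G : SimpleGraph V} {f : V → α}
    (hf : ∀ u v, G.Adj u v → f u = f v) {u v : V} (h : G.Reachable u v) : f u = f v := by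
  obtain ⟨p⟩ := h
  induction p with
  | nil => rfl
  | cons huw _ ih => exact (hf _ _ huw).trans ih

theorem minDeg_eq_of_forall_ncard_neighborSet {V : Type*} [Fintype V] [Nonempty V]
    {G : SimpleGraph V} {d : ℕ} (h : ∀ v, (G.neighborSet v).ncard = d) : minDeg G = d := by
  classical
  unfold minDeg
  convert IsRegularOfDegree.minDegree_eq (G := G) fun v => ?_
  rw [← card_neighborSet_eq_degree, ← Nat.card_eq_fintype_card, Nat.card_coe_set_eq, h]

section RookGraph

variable {V α β : Type*} (a : V → α) (b : V → β)

/-- The rook's graph on `α × β` pulled back along `(a, b)`, with each fibre made a clique. For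
`α = β = Bool` the four fibres are the classes `V₁, …, V₄`, and colour `0` (red) of
`rookColouring` marks the edges whose ends agree in `a`. -/
def rookGraph : SimpleGraph V where
  Adj u v := u ≠ v ∧ (a u = a v ∨ b u = b v)
  symm := ⟨fun _ _ h => ⟨h.1.symm, h.2.imp Eq.symm Eq.symm⟩⟩
  loopless := ⟨fun _ h => h.1 rfl⟩

def rookColouring [DecidableEq α] : Sym2 V → Fin 2 :=
  Sym2.lift ⟨fun u v => if a u = a v then 0 else 1, fun u v => by simp only [eq_comm]⟩

theorem neighborSet_rookGraph (v : V) :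
    (rookGraph a b).neighborSet v = {w | a w ≠ a v ∧ b w ≠ b v}ᶜ \ {v} := by
  ext w
  simp only [mem_neighborSet, rookGraph, Set.mem_sdiff, Set.mem_compl_iff, Set.mem_ofPred_eq,
    Set.mem_singleton_iff]
  tauto

variable [DecidableEq α]

theorem colourSub_rookColouring_zero_adj {u v : V} :
    (colourSub (rookGraph a b) (rookColouring a) 0).Adj u v ↔ u ≠ v ∧ a u = a v := by
  change (_ ∧ (if a u = a v then _ else _) = _) ↔ _
  split_ifs <;> simp_all [rookGraph]

theorem colourSub_rookColouring_one_adj {u v : V} :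
    (colourSub (rookGraph a b) (rookColouring a) 1).Adj u v ↔ a u ≠ a v ∧ b u = b v := by
  change (_ ∧ (if a u = a v then _ else _) = _) ↔ _
  by_cases h : a u = a v
  · simp [h]
  · simp [rookGraph, h, show u ≠ v by rintro rfl; exact h rfl]

theorem supp_colourSub_rookColouring_zero (u : V) :
    ((colourSub (rookGraph a b) (rookColouring a) 0).connectedComponentMk u).supp =
      {w | a w = a u} := by
  ext w
  simp only [ConnectedComponent.mem_supp_iff, ConnectedComponent.eq, Set.mem_ofPred_eq]
  refine ⟨fun h => (h.eq_of_forall_adj fun x y hxy => ?_), fun h => ?_⟩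
  · exact ((colourSub_rookColouring_zero_adj a b).1 hxy).2
  · rcases eq_or_ne w u with rfl | hwu
    · rfl
    · exact ((colourSub_rookColouring_zero_adj a b).2 ⟨hwu, h⟩).reachable

theorem supp_colourSub_rookColouring_one {u v : V}
    (huv : (colourSub (rookGraph a b) (rookColouring a) 1).Adj u v) :
    ((colourSub (rookGraph a b) (rookColouring a) 1).connectedComponentMk u).supp =
      {w | b w = b u} := by
  obtain ⟨hauv, hbuv⟩ := (colourSub_rookColouring_one_adj a b).1 huv
  ext w
  simp only [ConnectedComponent.mem_supp_iff, ConnectedComponent.eq, Set.mem_ofPred_eq]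
  refine ⟨fun h => (h.eq_of_forall_adj fun x y hxy => ?_), fun h => ?_⟩
  · exact ((colourSub_rookColouring_one_adj a b).1 hxy).2
  by_cases hw : a w = a u
  · have hwv : (colourSub (rookGraph a b) (rookColouring a) 1).Adj w v :=
        (colourSub_rookColouring_one_adj a b).2 ⟨hw ▸ hauv, h.trans hbuv⟩
    exact hwv.reachable.trans huv.reachable.symm
  · exact ((colourSub_rookColouring_one_adj a b).2 ⟨hw, h⟩).reachable

end RookGraph

section BlowUp

variable {V α β W : Type*} (e : V ≃ α × β × W)

theorem ncard_setOf_fst_eq_of_equiv (x : α) :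
    {w | (e w).1 = x}.ncard = Nat.card β * Nat.card W := by
  rw [show {w | (e w).1 = x} = e ⁻¹' ({x} ×ˢ Set.univ) by ext; simp,
    Set.ncard_preimage_of_injective_subset_range e.injective (by simp)]
  simp [Set.ncard_prod]

theorem ncard_setOf_snd_fst_eq_of_equiv (y : β) :
    {w | (e w).2.1 = y}.ncard = Nat.card α * Nat.card W := by
  rw [show {w | (e w).2.1 = y} = e ⁻¹' (Set.univ ×ˢ {y} ×ˢ Set.univ) by ext; simp,
    Set.ncard_preimage_of_injective_subset_range e.injective (by simp)]
  simp [Set.ncard_prod]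

theorem ncard_neighborSet_rookGraph_of_equiv [Finite α] [Finite β] [Finite W] (v : V) :
    ((rookGraph (fun w => (e w).1) (fun w => (e w).2.1)).neighborSet v).ncard =
      Nat.card V - (Nat.card α - 1) * (Nat.card β - 1) * Nat.card W - 1 := by
  have : Finite V := .of_equiv _ e.symm
  have hnon : {w | (e w).1 ≠ (e v).1 ∧ (e w).2.1 ≠ (e v).2.1}.ncard =
      (Nat.card α - 1) * (Nat.card β - 1) * Nat.card W := by
    rw [show {w | (e w).1 ≠ (e v).1 ∧ (e w).2.1 ≠ (e v).2.1} =
        e ⁻¹' ({(e v).1}ᶜ ×ˢ {(e v).2.1}ᶜ ×ˢ Set.univ) by ext; simp,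
      Set.ncard_preimage_of_injective_subset_range e.injective (by simp)]
    rw [Set.ncard_prod, Set.ncard_prod, Set.ncard_compl, Set.ncard_compl, Set.ncard_singleton,
      Set.ncard_singleton, Set.ncard_univ, mul_assoc]
  rw [neighborSet_rookGraph, Set.ncard_sdiff_singleton_of_mem (by simp), Set.ncard_compl, hnon]

end BlowUp

/-- For n ≥ 4 divisible by 4, there is a graph G on n vertices with δ(G) = 3n/4 - 1 and a
2-edge-colouring in which every monochromatic component has order exactly n/2. -/
theorem stmt_4 (n : ℕ) (hn : 4 ≤ n) (hdvd : 4 ∣ n) :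
    ∃ (G : SimpleGraph (Fin n)) (c : Sym2 (Fin n) → Fin 2),
      minDeg G = 3 * n / 4 - 1 ∧
      ∀ (i : Fin 2) (K : (colourSub G c i).ConnectedComponent),
        IsMonoComp G c i K → 2 * K.supp.ncard = n := by
  obtain ⟨m, rfl⟩ := hdvd
  have : Nonempty (Fin (4 * m)) := ⟨⟨0, by omega⟩⟩
  let e : Fin (4 * m) ≃ Bool × Bool × Fin m := Fintype.equivOfCardEq (by
    simp only [Fintype.card_fin, Fintype.card_prod, Fintype.card_bool]; ring)
  refine ⟨rookGraph (fun w => (e w).1) (fun w => (e w).2.1), rookColouring (fun w => (e w).1),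
    minDeg_eq_of_forall_ncard_neighborSet fun v => ?_, ?_⟩
  · rw [ncard_neighborSet_rookGraph_of_equiv]
    simp only [Nat.card_eq_fintype_card, Fintype.card_bool, Fintype.card_fin]
    omega
  · rintro i K ⟨u, v, huv, rfl⟩
    match i with
    | 0 =>
      rw [supp_colourSub_rookColouring_zero, ncard_setOf_fst_eq_of_equiv]
      simp only [Nat.card_eq_fintype_card, Fintype.card_bool, Fintype.card_fin]
      ring
    | 1 =>
      rw [supp_colourSub_rookColouring_one _ _ huv, ncard_setOf_snd_fst_eq_of_equiv]
      simp only [Nat.card_eq_fintype_card, Fintype.card_bool, Fintype.card_fin]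
      ring
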